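/- Let (πₐ)_{a ≥ 1} be finite reward sequences (blocks) such that the average reward of block πₐ is greater than r − 1/a for every a, and all rewards lie in a bounded interval [−M, M]. Then there exist repetition counts b₁, b₂, ... ∈ ℕ such that the infinite concatenation π₁^{b₁} π₂^{b₂} π₃^{b₃} ... has mean payoff (liminf of running averages) at least r. -/

import Mathlib

/-!
Let every reward be at least `r - K`. Choose the repetition counts recursively so that segment
`a` (the copies of block `a`) is more than `a + 1` times as long as everything before it plus
`K` times the length of block `a + 1`. At a time `n` inside segment `a + 1`, the running sum then
falls short of `r * n` by at most `2 * n / (a + 1)`: the complete copies of blocks `a` and `a + 1`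
fall short by at most `1 / (a + 1)` per step, while the earlier history (at most `1` per step) and
the incomplete last copy of block `a + 1` (at most `K` per step) together fall short by at most
`n / (a + 1)`.
-/

open Filter Finset

/-- The infinite sequence obtained by concatenating, for each `a = 0, 1, 2, …`,
`b a` copies of the finite block `π a`. (When each block is nonempty and each
repetition count is positive, the prefix of the first `i + 1` blocks has length
`> i`, so position `i` is well defined; `getD … 0` is the value there.) -/
noncomputable def concatSeq (π : ℕ → List ℝ) (b : ℕ → ℕ) (i : ℕ) : ℝ :=
  (((List.range (i + 1)).map (fun a => (List.replicate (b a) (π a)).flatten)).flatten).getD i 0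

namespace List

variable {R : Type*}

theorem sum_range_getD_eq_sum_take [AddCommMonoid R] (l : List R) {n : ℕ} (hn : n ≤ l.length) :
    ∑ i ∈ Finset.range n, l.getD i 0 = (l.take n).sum := by
  induction n with
  | zero => simp
  | succ n ih =>
    rw [Finset.sum_range_succ, ih (by omega), sum_take_succ _ _ hn, getD_eq_getElem _ _ hn]

variable [CommRing R] [LinearOrder R] [IsStrictOrderedRing R]

theorem mul_length_flatten_le_sum_flatten {β : R} {ls : List (List R)}
    (h : ∀ l ∈ ls, β * l.length ≤ l.sum) : β * ls.flatten.length ≤ ls.flatten.sum := by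
  induction ls with
  | nil => simp
  | cons l ls ih =>
    simp only [flatten_cons, length_append, sum_append, Nat.cast_add, mul_add]
    exact add_le_add (h l mem_cons_self) (ih fun l' hl' => h l' (mem_cons_of_mem l hl'))

/-- Only the last, incomplete block of the prefix can fall short of the average `α`, and it
does so by at most `C` per element. -/
theorem mul_length_take_flatten_sub_le_sum {α C : R} {L : ℕ} {ls : List (List R)} (hC : 0 ≤ C)
    (hsum : ∀ l ∈ ls, α * l.length ≤ l.sum) (hlow : ∀ l ∈ ls, ∀ x ∈ l, α - C ≤ x)
    (hlen : ∀ l ∈ ls, l.length ≤ L) (m : ℕ) :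
    α * (ls.flatten.take m).length - C * L ≤ (ls.flatten.take m).sum := by
  induction ls generalizing m with
  | nil => simpa using mul_nonneg hC (Nat.cast_nonneg L)
  | cons l ls ih =>
    simp only [forall_mem_cons] at hsum hlow hlen
    rw [flatten_cons, take_append, length_append, sum_append]
    by_cases hm : m ≤ l.length
    · have hk : ((l.take m).length : R) ≤ L := by
        exact_mod_cast (length_take_le' m l).trans hlen.1
      have hpart := card_nsmul_le_sum (l.take m) (α - C) fun x hx => hlow.1 x (mem_of_mem_take hx)
      rw [nsmul_eq_mul] at hpart
      simp only [Nat.sub_eq_zero_of_le hm, take_zero, length_nil, sum_nil, add_zero]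
      nlinarith
    · rw [take_of_length_le (by omega), Nat.cast_add]
      linarith [hsum.1, ih hsum.2 hlow.2 hlen.2 (m - l.length)]

end List

section Concatenation

variable {α : Type*} (q : ℕ → List α) (c : ℕ → ℕ)

def repBlock (a : ℕ) : List α := (List.replicate (c a) (q a)).flatten

def concatPrefix (j : ℕ) : List α := ((List.range j).map (repBlock q c)).flatten

theorem concatPrefix_succ (j : ℕ) :
    concatPrefix q c (j + 1) = concatPrefix q c j ++ repBlock q c j := by
  simp [concatPrefix, List.range_succ]

theorem length_repBlock (a : ℕ) : (repBlock q c a).length = c a * (q a).length := by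
  simp [repBlock, List.length_flatten]

theorem concatPrefix_isPrefix {j k : ℕ} (h : j ≤ k) :
    concatPrefix q c j <+: concatPrefix q c k := by
  induction k, h using Nat.le_induction with
  | base => exact List.prefix_refl _
  | succ k _ ih => exact ih.trans (concatPrefix_succ q c k ▸ List.prefix_append _ _)

theorem le_length_concatPrefix (hq : ∀ a, q a ≠ []) (hc : ∀ a, 0 < c a) (j : ℕ) :
    j ≤ (concatPrefix q c j).length := by
  induction j with
  | zero => simp
  | succ j ih =>
    have : 0 < (q j).length := List.length_pos_iff.2 (hq j)
    rw [concatPrefix_succ, List.length_append, length_repBlock]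
    nlinarith [hc j]

theorem exists_mem_of_mem_concatPrefix {x : α} {j : ℕ} (hx : x ∈ concatPrefix q c j) :
    ∃ a, x ∈ q a := by
  obtain ⟨_, hs, hxs⟩ := List.mem_flatten.1 hx
  obtain ⟨a, -, rfl⟩ := List.mem_map.1 hs
  obtain ⟨_, hl, hxl⟩ := List.mem_flatten.1 hxs
  rw [List.eq_of_mem_replicate hl] at hxl
  exact ⟨a, hxl⟩

end Concatenation

section ConcatSeq

variable (q : ℕ → List ℝ) {c : ℕ → ℕ}

theorem concatSeq_eq_getD (i : ℕ) : concatSeq q c i = (concatPrefix q c (i + 1)).getD i 0 := rfl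

theorem sum_range_concatSeq (hq : ∀ a, q a ≠ []) (hc : ∀ a, 0 < c a) {n j : ℕ}
    (hn : n ≤ (concatPrefix q c j).length) :
    ∑ i ∈ range n, concatSeq q c i = ((concatPrefix q c j).take n).sum := by
  rw [← List.sum_range_getD_eq_sum_take _ hn]
  refine Finset.sum_congr rfl fun i hi => ?_
  have hij : i < (concatPrefix q c j).length := (mem_range.1 hi).trans_le hn
  have hii : i < (concatPrefix q c (i + 1)).length := le_length_concatPrefix q c hq hc _
  -- one of the two lists is a prefix of the other, and both contain position `i`
  rw [concatSeq_eq_getD]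
  rcases le_total j (i + 1) with h | h
  · obtain ⟨t, ht⟩ := concatPrefix_isPrefix q c h
    rw [← ht, List.getD_append _ _ _ _ hij]
  · obtain ⟨t, ht⟩ := concatPrefix_isPrefix q c h
    rw [← ht, List.getD_append _ _ _ _ hii]

theorem concatSeq_le {B : ℝ} (hB : 0 ≤ B) (h : ∀ a, ∀ x ∈ q a, x ≤ B) (i : ℕ) :
    concatSeq q c i ≤ B := by
  rw [concatSeq_eq_getD, List.getD_eq_getElem?_getD]
  cases hx : (concatPrefix q c (i + 1))[i]? with
  | none => exact hB
  | some x =>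
    obtain ⟨a, ha⟩ := exists_mem_of_mem_concatPrefix q c (List.mem_of_getElem? hx)
    exact h a x ha

end ConcatSeq

section RepCount

variable {α : Type*} (q : ℕ → List α) (K : ℕ)

/-- The value of `repCount q K a` is written out so that the recursion is structural. -/
def segStart : ℕ → ℕ
  | 0 => 0
  | a + 1 => segStart a + ((a + 1) * (segStart a + K * (q (a + 1)).length) + 1) * (q a).length

def repCount (a : ℕ) : ℕ := (a + 1) * (segStart q K a + K * (q (a + 1)).length) + 1

theorem segStart_succ (a : ℕ) :
    segStart q K (a + 1) = segStart q K a + repCount q K a * (q a).length :=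
  rfl

theorem repCount_pos (a : ℕ) : 0 < repCount q K a := Nat.succ_pos _

theorem length_concatPrefix_repCount (j : ℕ) :
    (concatPrefix q (repCount q K) j).length = segStart q K j := by
  induction j with
  | zero => rfl
  | succ j ih => rw [concatPrefix_succ, List.length_append, length_repBlock, ih, segStart_succ]

theorem segStart_mono : Monotone (segStart q K) :=
  monotone_nat_of_le_succ fun a => by rw [segStart_succ]; omega

variable {q}

theorem mul_lt_repCount_mul_length {a : ℕ} (hq : q a ≠ []) :
    (a + 1) * (segStart q K a + K * (q (a + 1)).length) < repCount q K a * (q a).length :=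
  Nat.lt_of_lt_of_le (Nat.lt_succ_self _) (Nat.le_mul_of_pos_right _ (List.length_pos_iff.2 hq))

theorem le_segStart (hq : ∀ a, q a ≠ []) (a : ℕ) : a ≤ segStart q K a := by
  induction a with
  | zero => rfl
  | succ a ih => have := mul_lt_repCount_mul_length K (hq a); rw [segStart_succ]; omega

end RepCount

theorem Monotone.exists_le_lt_succ {β : Type*} [LinearOrder β] {f : ℕ → β} (hf : Monotone f)
    {A : ℕ} {x : β} (hA : f A ≤ x) (hx : ∃ k, x < f k) :
    ∃ a, A ≤ a ∧ f a ≤ x ∧ x < f (a + 1) := by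
  classical
  have hk : x < f (Nat.find hx) := Nat.find_spec hx
  have hAk : A < Nat.find hx := lt_of_not_ge fun h => ((hf h).trans hA).not_gt hk
  obtain ⟨a, ha⟩ : ∃ a, Nat.find hx = a + 1 := Nat.exists_eq_add_one_of_ne_zero (by omega)
  rw [ha] at hk hAk
  exact ⟨a, by omega, not_lt.1 (Nat.find_min hx (by omega)), hk⟩

section MeanPayoff

variable {q : ℕ → List ℝ} {c : ℕ → ℕ} {r : ℝ}

theorem mul_length_repBlock_le_sum {β : ℝ} {k : ℕ} (hk : β * (q k).length ≤ (q k).sum) :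
    β * (repBlock q c k).length ≤ (repBlock q c k).sum :=
  List.mul_length_flatten_le_sum_flatten fun _ hl => List.eq_of_mem_replicate hl ▸ hk

theorem mul_length_take_repBlock_sub_le_sum {β C : ℝ} {k m : ℕ} (hC : 0 ≤ C)
    (hk : β * (q k).length ≤ (q k).sum) (hlow : ∀ x ∈ q k, β - C ≤ x)
    (hm : m ≤ (repBlock q c k).length) :
    β * m - C * (q k).length ≤ ((repBlock q c k).take m).sum := by
  have h := List.mul_length_take_flatten_sub_le_sum (ls := List.replicate (c k) (q k)) hC
    (fun _ hl => List.eq_of_mem_replicate hl ▸ hk)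
    (fun _ hl => List.eq_of_mem_replicate hl ▸ hlow)
    (fun _ hl => (congrArg List.length (List.eq_of_mem_replicate hl)).le) m
  rwa [← repBlock, List.length_take_of_le hm] at h

theorem mul_length_le_sum_concatPrefix_succ
    (hsum : ∀ a : ℕ, (r - 1 / (a + 1)) * (q a).length ≤ (q a).sum) (a : ℕ) :
    (r - 1) * (concatPrefix q c a).length + (r - 1 / (a + 1)) * (repBlock q c a).length ≤
      (concatPrefix q c (a + 1)).sum := by
  have hweak : ∀ k : ℕ, (r - 1) * (q k).length ≤ (q k).sum := fun k =>
    (mul_le_mul_of_nonneg_right (by gcongr; exact div_le_one_of_le₀ (by simp) (by positivity))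
      (Nat.cast_nonneg _)).trans (hsum k)
  rw [concatPrefix_succ, List.sum_append]
  refine add_le_add (List.mul_length_flatten_le_sum_flatten ?_)
    (mul_length_repBlock_le_sum (hsum a))
  simp only [List.mem_map, List.mem_range]
  rintro _ ⟨k, -, rfl⟩
  exact mul_length_repBlock_le_sum (hweak k)

variable {K : ℕ}

theorem sum_range_concatSeq_repCount_eq (hq : ∀ a, q a ≠ []) {a n : ℕ}
    (hn : segStart q K (a + 1) ≤ n) (hn' : n ≤ segStart q K (a + 2)) :
    ∑ i ∈ range n, concatSeq q (repCount q K) i = (concatPrefix q (repCount q K) (a + 1)).sum +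
      ((repBlock q (repCount q K) (a + 1)).take (n - segStart q K (a + 1))).sum := by
  have hlen := length_concatPrefix_repCount q K
  rw [sum_range_concatSeq q hq (repCount_pos q K) ((hlen (a + 2)).symm ▸ hn'),
    concatPrefix_succ, List.take_append, List.take_of_length_le ((hlen _).symm ▸ hn),
    List.sum_append, hlen]

theorem mul_le_sum_range_concatSeq_repCount (hq : ∀ a, q a ≠ [])
    (hsum : ∀ a : ℕ, (r - 1 / (a + 1)) * (q a).length ≤ (q a).sum)
    (hlow : ∀ a, ∀ x ∈ q a, r - K ≤ x) {a n : ℕ}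
    (hn : segStart q K (a + 1) ≤ n) (hn' : n ≤ segStart q K (a + 2)) :
    (r - 2 / (a + 1)) * n ≤ ∑ i ∈ range n, concatSeq q (repCount q K) i := by
  set c := repCount q K
  set D := segStart q K
  set ℓ := (repBlock q c a).length
  set L := (q (a + 1)).length
  set m := n - D (a + 1)
  have hℓ : ℓ = c a * (q a).length := length_repBlock q c a
  have hD : D (a + 1) = D a + ℓ := hℓ ▸ segStart_succ q K a
  have hm : m ≤ (repBlock q c (a + 1)).length := by
    have : D (a + 2) = D (a + 1) + c (a + 1) * L := segStart_succ q K (a + 1)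
    have : (repBlock q c (a + 1)).length = c (a + 1) * L := length_repBlock q c (a + 1)
    omega
  have hfull : (r - 1) * D a + (r - 1 / (a + 1)) * ℓ ≤ (concatPrefix q c (a + 1)).sum := by
    have hlen : ∀ j, (concatPrefix q c j).length = D j := length_concatPrefix_repCount q K
    simpa only [hlen] using mul_length_le_sum_concatPrefix_succ (c := c) hsum a
  have hnext : (r - 1 / (a + 2)) * L ≤ (q (a + 1)).sum := by
    convert hsum (a + 1) using 4; push_cast; ring
  have hpartial : (r - 1 / (a + 2)) * m - K * L ≤ ((repBlock q c (a + 1)).take m).sum :=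
    mul_length_take_repBlock_sub_le_sum (Nat.cast_nonneg K) hnext
      (fun x hx => by linarith [hlow _ x hx, one_div_nonneg.2 (by positivity : (0 : ℝ) ≤ a + 2)])
      hm
  have hpast : (a + 1) * (D a + K * L) ≤ n := by
    have : (a + 1) * (D a + K * L) < ℓ := hℓ ▸ mul_lt_repCount_mul_length K (hq a)
    omega
  have hn_eq : (n : ℝ) = D a + ℓ + m := by norm_cast; omega
  have hslower : 1 / ((a : ℝ) + 2) * m ≤ 1 / (a + 1) * m := by gcongr; linarith
  set t : ℝ := 1 / (a + 1) with ht
  have hpast' : (D a : ℝ) + K * L ≤ t * n := by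
    rw [ht, one_div_mul_eq_div, le_div_iff₀ (by positivity), mul_comm]
    exact_mod_cast hpast
  rw [sum_range_concatSeq_repCount_eq hq hn hn', show 2 / ((a : ℝ) + 1) = 2 * t by rw [ht]; ring]
  rw [hn_eq] at hpast' ⊢
  nlinarith [mul_nonneg (by positivity : 0 ≤ t) (Nat.cast_nonneg (D a))]

theorem le_liminf_avg_concatSeq_repCount (hq : ∀ a, q a ≠ []) {M : ℝ}
    (hM : ∀ a, ∀ x ∈ q a, |x| ≤ M)
    (havg : ∀ a : ℕ, r - 1 / (a + 1) < (q a).sum / (q a).length) (hK : M + |r| ≤ K) :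
    r ≤ liminf (fun n : ℕ => (∑ i ∈ range n, concatSeq q (repCount q K) i) / n) atTop := by
  have hM0 : 0 ≤ M := by
    obtain ⟨x, hx⟩ := List.exists_mem_of_ne_nil _ (hq 0)
    exact (abs_nonneg x).trans (hM 0 x hx)
  have hsum : ∀ a : ℕ, (r - 1 / (a + 1)) * (q a).length ≤ (q a).sum := fun a =>
    ((lt_div_iff₀ (by exact_mod_cast List.length_pos_iff.2 (hq a))).1 (havg a)).le
  have hlow : ∀ a, ∀ x ∈ q a, r - K ≤ x := fun a x hx => by
    linarith [neg_abs_le x, hM a x hx, le_abs_self r]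
  have hbdd : IsBoundedUnder (· ≤ ·) atTop
      fun n : ℕ => (∑ i ∈ range n, concatSeq q (repCount q K) i) / n := by
    refine isBoundedUnder_of ⟨M, fun n => div_le_of_le_mul₀ (Nat.cast_nonneg n) hM0 ?_⟩
    simpa [mul_comm] using Finset.sum_le_card_nsmul (range n) _ M fun i _ =>
      concatSeq_le q hM0 (fun a x hx => (le_abs_self x).trans (hM a x hx)) i
  refine le_of_forall_sub_le fun ε hε => le_liminf_of_le hbdd.isCoboundedUnder_ge ?_
  obtain ⟨A, hA⟩ := exists_nat_one_div_lt (half_pos hε)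
  filter_upwards [eventually_ge_atTop (segStart q K (A + 1))] with n hn
  obtain ⟨_ | a, haA, hDn, hnD⟩ := (segStart_mono q K).exists_le_lt_succ hn
    ⟨n + 1, Nat.lt_of_lt_of_le (Nat.lt_succ_self n) (le_segStart K hq _)⟩
  · omega
  have hn0 : (0 : ℝ) < n :=
    Nat.cast_pos.2 ((Nat.succ_pos a).trans_le ((le_segStart K hq _).trans hDn))
  have hest := mul_le_sum_range_concatSeq_repCount hq hsum hlow hDn hnD.le
  have haA' : 2 / ((a : ℝ) + 1) ≤ ε := by
    have : 1 / ((a : ℝ) + 1) ≤ 1 / ((A : ℝ) + 1) := by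
      gcongr; exact_mod_cast (by omega : A ≤ a)
    rw [show (2 : ℝ) / (a + 1) = 2 * (1 / (a + 1)) by ring]
    linarith
  rw [le_div_iff₀ hn0]
  linarith [mul_le_mul_of_nonneg_right haA' hn0.le]

end MeanPayoff

/-- If the blocks `π₁, π₂, …` consist of rewards in `[-M, M]` and the average
reward of block `πₐ` exceeds `r - 1/a`, then there are repetition counts
`b₁, b₂, … ≥ 1` such that the concatenation `π₁^{b₁} π₂^{b₂} …` has mean payoff
(liminf of running averages) at least `r`. -/
theorem exists_repetitions_meanPayoff_ge (π : ℕ → List ℝ) (M r : ℝ)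
    (hne : ∀ a : ℕ, 1 ≤ a → π a ≠ [])
    (hM : ∀ a : ℕ, 1 ≤ a → ∀ x ∈ π a, |x| ≤ M)
    (havg : ∀ a : ℕ, 1 ≤ a → r - 1 / (a : ℝ) < (π a).sum / (π a).length) :
    ∃ b : ℕ → ℕ, (∀ a : ℕ, 1 ≤ a → 1 ≤ b a) ∧
      r ≤ Filter.liminf
        (fun n : ℕ =>
          (∑ i ∈ Finset.range n,
            concatSeq (fun a => π (a + 1)) (fun a => b (a + 1)) i) / n)
        atTop := by
  set q : ℕ → List ℝ := fun a => π (a + 1)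
  set K := ⌈M + |r|⌉₊
  have hliminf := le_liminf_avg_concatSeq_repCount (q := q) (K := K)
    (fun a => hne (a + 1) (by omega)) (fun a => hM (a + 1) (by omega))
    (fun a => by simpa using havg (a + 1) (by omega)) (Nat.le_ceil _)
  exact ⟨fun a => repCount q K (a - 1), fun a _ => repCount_pos q K (a - 1),
    by simpa only [Nat.add_sub_cancel] using hliminf⟩
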